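/- arXiv:1609.01577 — 2 statements merged into one kernel-verified Lean document; each statement's English description precedes it below -/
import Mathlib

section
/- Let Z_1, ..., Z_J be i.i.d. standard normal random variables. There exists a universal constant K > 1 such that for all s > 0, ε > 0, J ∈ ℕ, and nonzero a ∈ ℝ^J: -log P((s²·Σ_{j≤J} a_j² Z_j²)^{1/2} ≤ ε) ≤ 2J·log(max(K, s·‖a‖₂/ε)). -/
/-!
Take `K = 3` and `M = max 3 (s‖a‖₂/ε)`. On the cube `|Z_j| ≤ M⁻¹` for all `j` the quantity
`√(s² Σ a_j² Z_j²)` is at most `s‖a‖₂/M ≤ ε`. The standard Gaussian density is at least `1/6` on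
`[-1, 1]`, so each `|Z_j| ≤ M⁻¹` has probability at least `(3M)⁻¹`, and by independence the cube has
probability at least `(3M)^{-J}`. Hence `-log P ≤ J log (3M) ≤ 2J log M`, as `3 ≤ M`.
-/

open MeasureTheory ProbabilityTheory Real Set

lemma one_sixth_le_gaussianPDFReal {x : ℝ} (hx : |x| ≤ 1) : 1 / 6 ≤ gaussianPDFReal 0 1 x := by
  have hsqrt : √(2 * π) ≤ 3 := by
    rw [show (3 : ℝ) = √(3 ^ 2) by rw [sqrt_sq (by norm_num)]]
    exact sqrt_le_sqrt (by linarith [pi_lt_four])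
  have hexp : 1 / 2 ≤ rexp (-x ^ 2 / 2) := by
    have hx2 : x ^ 2 ≤ 1 := by nlinarith [sq_abs x, abs_nonneg x]
    linarith [add_one_le_exp (-x ^ 2 / 2)]
  have hpos : 0 < √(2 * π) := sqrt_pos.2 (by positivity)
  rw [gaussianPDFReal_def]
  simp only [NNReal.coe_one, mul_one, sub_zero]
  rw [inv_mul_eq_div, le_div_iff₀ hpos]
  nlinarith

lemma ofReal_div_three_le_gaussianReal_Icc {t : ℝ} (ht : t ≤ 1) :
    ENNReal.ofReal (t / 3) ≤ gaussianReal 0 1 (Icc (-t) t) := by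
  rw [gaussianReal_apply 0 one_ne_zero]
  calc ENNReal.ofReal (t / 3) ≤ ENNReal.ofReal (1 / 6) * volume (Icc (-t) t) := by
        rw [Real.volume_Icc, ← ENNReal.ofReal_mul (by norm_num)]
        exact ENNReal.ofReal_le_ofReal (by linarith)
    _ = ∫⁻ _ in Icc (-t) t, ENNReal.ofReal (1 / 6) := by rw [setLIntegral_const, mul_comm]
    _ ≤ ∫⁻ x in Icc (-t) t, gaussianPDF 0 1 x := by
        refine setLIntegral_mono (measurable_gaussianPDF 0 1) fun x hx ↦ ?_
        exact ENNReal.ofReal_le_ofReal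
          (one_sixth_le_gaussianPDFReal (abs_le.2 ⟨by linarith [hx.1, hx.2], hx.2.trans ht⟩))

lemma ProbabilityTheory.iIndepFun.pow_le_measure_forall_mem {Ω ι β : Type*} [Fintype ι]
    [MeasurableSpace Ω] [MeasurableSpace β] {μ : Measure Ω} {Z : ι → Ω → β} (hind : iIndepFun Z μ)
    (hZ : ∀ j, Measurable (Z j)) {S : Set β} (hS : MeasurableSet S) {c : ENNReal}
    (hc : ∀ j, c ≤ μ.map (Z j) S) :
    c ^ Fintype.card ι ≤ μ {ω | ∀ j, Z j ω ∈ S} := by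
  have hcube : {ω | ∀ j, Z j ω ∈ S} = ⋂ j ∈ Finset.univ, Z j ⁻¹' S := by ext; simp
  calc c ^ Fintype.card ι = ∏ _j : ι, c := by rw [Finset.prod_const, Finset.card_univ]
    _ ≤ ∏ j, μ (Z j ⁻¹' S) :=
        Finset.prod_le_prod' fun j _ ↦ (hc j).trans_eq (Measure.map_apply (hZ j) hS)
    _ = μ {ω | ∀ j, Z j ω ∈ S} := by
        rw [hcube, hind.measure_inter_preimage_eq_mul Finset.univ fun _ _ ↦ hS]

lemma sqrt_mul_sum_sq_mul_sq_le {ι : Type*} [Fintype ι] (a z : ι → ℝ) {s t : ℝ} (hs : 0 ≤ s)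
    (ht : 0 ≤ t) (hz : ∀ j, |z j| ≤ t) :
    √(s ^ 2 * ∑ j, a j ^ 2 * z j ^ 2) ≤ s * t * √(∑ j, a j ^ 2) := by
  have hsum : s ^ 2 * ∑ j, a j ^ 2 * z j ^ 2 ≤ (s * t) ^ 2 * ∑ j, a j ^ 2 := by
    rw [Finset.mul_sum, Finset.mul_sum]
    refine Finset.sum_le_sum fun j _ ↦ ?_
    have hzt : z j ^ 2 ≤ t ^ 2 := sq_le_sq' (abs_le.1 (hz j)).1 (abs_le.1 (hz j)).2
    nlinarith [mul_le_mul_of_nonneg_left hzt (mul_nonneg (sq_nonneg s) (sq_nonneg (a j)))]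
  calc √(s ^ 2 * ∑ j, a j ^ 2 * z j ^ 2) ≤ √((s * t) ^ 2 * ∑ j, a j ^ 2) := sqrt_le_sqrt hsum
    _ = s * t * √(∑ j, a j ^ 2) := by rw [sqrt_mul (sq_nonneg _), sqrt_sq (by positivity)]

lemma neg_log_toReal_le_of_pow_le {Ω : Type*} [MeasurableSpace Ω] {μ : Measure Ω}
    [IsFiniteMeasure μ] {E : Set Ω} {q : ℝ} (hq : 0 < q) {n : ℕ}
    (hE : ENNReal.ofReal q ^ n ≤ μ E) :
    -log (μ E).toReal ≤ n * log q⁻¹ := by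
  rw [← ENNReal.ofReal_pow hq.le, ENNReal.ofReal_le_iff_le_toReal (measure_ne_top μ E)] at hE
  have hlog := log_le_log (pow_pos hq n) hE
  rw [log_pow] at hlog
  rw [log_inv]
  linarith

/-- There is a universal constant `K > 1` such that for any i.i.d. standard normals
`Z_1,...,Z_J`, any `s, ε > 0` and nonzero `a ∈ ℝ^J`,
`-log P(√(s²·Σ a_j² Z_j²) ≤ ε) ≤ 2J·log(max(K, s‖a‖₂/ε))`. -/
theorem stmt2 :
    ∃ K : ℝ, 1 < K ∧
      ∀ (Ω : Type) [MeasurableSpace Ω] (μ : Measure Ω) [IsProbabilityMeasure μ]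
        (J : ℕ) (Z : Fin J → Ω → ℝ), (∀ j, Measurable (Z j)) →
          iIndepFun Z μ →
          (∀ j, μ.map (Z j) = gaussianReal 0 1) →
          ∀ (a : Fin J → ℝ), a ≠ 0 → ∀ s ε : ℝ, 0 < s → 0 < ε →
            -Real.log
                (μ {ω | Real.sqrt (s ^ 2 * ∑ j, (a j) ^ 2 * (Z j ω) ^ 2) ≤ ε}).toReal ≤
              2 * J * Real.log (max K (s * Real.sqrt (∑ j, (a j) ^ 2) / ε)) := by
  refine ⟨3, by norm_num, fun Ω _ μ _ J Z hZ hind hlaw a _ s ε hs hε ↦ ?_⟩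
  set M := max 3 (s * √(∑ j, a j ^ 2) / ε)
  have hM3 : 3 ≤ M := le_max_left _ _
  have hM : 0 < M := by linarith
  have hcube : {ω | ∀ j, Z j ω ∈ Icc (-M⁻¹) M⁻¹} ⊆
      {ω | √(s ^ 2 * ∑ j, a j ^ 2 * Z j ω ^ 2) ≤ ε} := fun ω hω ↦ by
    refine (sqrt_mul_sum_sq_mul_sq_le a (Z · ω) hs.le (by positivity)
      fun j ↦ abs_le.2 (hω j)).trans ?_
    rw [mul_right_comm, ← div_eq_mul_inv, div_le_iff₀ hM, mul_comm ε]
    exact (div_le_iff₀ hε).1 (le_max_right _ _)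
  have hprob : ENNReal.ofReal (M⁻¹ / 3) ^ J ≤ μ {ω | √(s ^ 2 * ∑ j, a j ^ 2 * Z j ω ^ 2) ≤ ε} := by
    have hcube_prob := hind.pow_le_measure_forall_mem hZ (measurableSet_Icc (a := -M⁻¹) (b := M⁻¹))
      fun j ↦ (hlaw j).symm ▸
        ofReal_div_three_le_gaussianReal_Icc (inv_le_one_of_one_le₀ (by linarith))
    rw [Fintype.card_fin] at hcube_prob
    exact hcube_prob.trans (measure_mono hcube)
  calc -log (μ _).toReal ≤ J * log (M⁻¹ / 3)⁻¹ := neg_log_toReal_le_of_pow_le (by positivity) hprob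
    _ ≤ J * log (M ^ 2) := by
        gcongr
        rw [inv_div, div_inv_eq_mul, sq]
        exact mul_le_mul_of_nonneg_right hM3 hM.le
    _ = 2 * J * log M := by rw [log_pow]; push_cast; ring
end

section
/- Let α, β, s, ε > 0, f₀ ∈ L²[0,1] with ‖f₀‖_β < ∞, and J ∈ ℕ with J ≥ (ε/‖f₀‖_β)^{−1/β}. Let H^{s,J} be the span of ψ_1,...,ψ_J with norm ‖Σ_{j≤J} h_j ψ_j‖²_{H^{s,J}} = (1/s²)Σ_{j≤J} j^{1+2α} h_j². Then inf{‖h‖²_{H^{s,J}} : h ∈ H^{s,J}, ‖h − f₀‖₂ ≤ ε} ≤ (‖f₀‖_β²/s²)·J^{max(1+2α−2β, 0)}. -/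
/-!
Take for `h` the truncation `Σ_{j ≤ J} ⟨f₀, ψ_j⟩ ψ_j`. Its distance to `f₀` is the tail of the
coefficient sequence, and on the tail `j^{2β} ≥ J^{2β}`, so `J^{2β} ‖h - f₀‖² ≤ ‖f₀‖_β² ≤ J^{2β} ε²`
by the choice of `J`. On the head `j^{1+2α} ≤ J^{max(1+2α-2β,0)} j^{2β}`, which bounds the RKHS norm
of `h` by `‖f₀‖_β² J^{max(1+2α-2β,0)} / s²`.
-/

open MeasureTheory Real

namespace HilbertBasis

variable {ι E : Type*} [NormedAddCommGroup E] [InnerProductSpace ℝ E]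

theorem hasSum_repr_sq (b : HilbertBasis ι ℝ E) (x : E) :
    HasSum (fun i => b.repr x i ^ 2) (‖x‖ ^ 2) := by
  simpa [← real_inner_self_eq_norm_sq, b.repr_apply_apply, real_inner_comm (b _) x, sq]
    using b.hasSum_inner_mul_inner x x

theorem repr_sum_repr_smul_sub [DecidableEq ι] (b : HilbertBasis ι ℝ E) (s : Finset ι) (x : E)
    (i : ι) : b.repr ((∑ j ∈ s, b.repr x j • b j) - x) i = if i ∈ s then 0 else -b.repr x i := by
  simp only [b.repr_apply_apply, inner_sub_right, inner_sum, real_inner_smul_right,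
    orthonormal_iff_ite.mp b.orthonormal, mul_ite, mul_one, mul_zero, Finset.sum_ite_eq]
  split_ifs <;> ring

theorem mul_norm_sum_repr_smul_sub_sq_le (b : HilbertBasis ι ℝ E) (s : Finset ι) (x : E)
    {w : ι → ℝ} {S t : ℝ} (hS : HasSum (fun i => w i * b.repr x i ^ 2) S)
    (hw : ∀ i, 0 ≤ w i) (ht : ∀ i ∉ s, t ≤ w i) :
    t * ‖(∑ j ∈ s, b.repr x j • b j) - x‖ ^ 2 ≤ S := by
  classical
  refine hasSum_le (fun i => ?_) ((b.hasSum_repr_sq _).mul_left t) hS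
  rw [b.repr_sum_repr_smul_sub]
  split_ifs with hi
  · simpa using mul_nonneg (hw i) (sq_nonneg (b.repr x i))
  · rw [neg_sq]
    exact mul_le_mul_of_nonneg_right (ht i hi) (sq_nonneg _)

end HilbertBasis

theorem rpow_le_rpow_max_sub_mul_rpow {x y : ℝ} (hx : 1 ≤ x) (hxy : x ≤ y) (γ δ : ℝ) :
    x ^ γ ≤ y ^ max (γ - δ) 0 * x ^ δ := by
  have hx0 : 0 < x := by linarith
  calc x ^ γ = x ^ (γ - δ) * x ^ δ := by rw [← rpow_add hx0, sub_add_cancel]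
    _ ≤ x ^ max (γ - δ) 0 * x ^ δ := by
        gcongr
        exact le_max_left _ _
    _ ≤ y ^ max (γ - δ) 0 * x ^ δ := by gcongr

theorem sum_range_rpow_mul_le (a : ℕ → ℝ) (ha : ∀ i, 0 ≤ a i) (J : ℕ) (γ δ : ℝ) :
    ∑ i ∈ Finset.range J, ((i : ℝ) + 1) ^ γ * a i ≤
      (J : ℝ) ^ max (γ - δ) 0 * ∑ i ∈ Finset.range J, ((i : ℝ) + 1) ^ δ * a i := by
  rw [Finset.mul_sum]
  refine Finset.sum_le_sum fun i hi => ?_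
  have hiJ : (i : ℝ) + 1 ≤ J := by exact_mod_cast Finset.mem_range.mp hi
  rw [← mul_assoc]
  exact mul_le_mul_of_nonneg_right
    (rpow_le_rpow_max_sub_mul_rpow (by simp) hiJ γ δ) (ha i)

theorem le_rpow_mul_sq_of_rpow_neg_inv_le {ε S β x : ℝ} (hε : 0 < ε) (hS : 0 < S) (hβ : 0 < β)
    (hx : (ε / √S) ^ (-(1 / β)) ≤ x) : S ≤ x ^ (2 * β) * ε ^ 2 := by
  have hr : 0 < ε / √S := by positivity
  have key : ((ε / √S) ^ (-(1 / β))) ^ (2 * β) = S / ε ^ 2 := by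
    rw [← rpow_mul hr.le, show -(1 / β) * (2 * β) = -2 by field_simp, rpow_neg hr.le,
      rpow_two, div_pow, sq_sqrt hS.le, inv_div]
  have := rpow_le_rpow (by positivity) hx (by positivity : 0 ≤ 2 * β)
  rwa [key, div_le_iff₀ (by positivity)] at this

theorem stmt6_general (α β s ε : ℝ) (hβ : 0 < β) (hε : 0 < ε)
    (ψ : HilbertBasis ℕ ℝ (Lp ℝ 2 (volume.restrict (Set.Icc (0:ℝ) 1))))
    (f₀ : Lp ℝ 2 (volume.restrict (Set.Icc (0:ℝ) 1)))
    (Sβ : ℝ) (hSpos : 0 < Sβ)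
    (hS : HasSum (fun i : ℕ => ((i : ℝ) + 1) ^ (2 * β) * (ψ.repr f₀ i) ^ 2) Sβ)
    (J : ℕ) (hJ : (ε / Real.sqrt Sβ) ^ (-(1 / β)) ≤ (J : ℝ)) :
    sInf {x : ℝ | ∃ c : ℕ → ℝ,
        ‖(∑ i ∈ Finset.range J, c i • ψ i) - f₀‖ ≤ ε ∧
        x = 1 / s ^ 2 * ∑ i ∈ Finset.range J, ((i : ℝ) + 1) ^ (1 + 2 * α) * (c i) ^ 2} ≤
      Sβ / s ^ 2 * (J : ℝ) ^ max (1 + 2 * α - 2 * β) 0 := by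
  have hJpos : (0 : ℝ) < J := (rpow_pos_of_pos (by positivity) _).trans_le hJ
  have htail : (J : ℝ) ^ (2 * β) * ‖(∑ i ∈ Finset.range J, ψ.repr f₀ i • ψ i) - f₀‖ ^ 2 ≤ Sβ :=
    ψ.mul_norm_sum_repr_smul_sub_sq_le _ f₀ hS (fun i => by positivity) fun i hi => by
      have hJi : (J : ℝ) ≤ i + 1 := by exact_mod_cast (not_lt.mp (Finset.mem_range.not.mp hi)).step
      exact rpow_le_rpow hJpos.le hJi (by positivity)
  have hclose : ‖(∑ i ∈ Finset.range J, ψ.repr f₀ i • ψ i) - f₀‖ ≤ ε := by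
    have := htail.trans (le_rpow_mul_sq_of_rpow_neg_inv_le hε hSpos hβ hJ)
    exact (pow_le_pow_iff_left₀ (norm_nonneg _) hε.le two_ne_zero).mp
      (le_of_mul_le_mul_left this (by positivity))
  refine csInf_le_of_le ⟨0, ?_⟩ ⟨ψ.repr f₀, hclose, rfl⟩ ?_
  · rintro _ ⟨c, -, rfl⟩
    positivity
  calc 1 / s ^ 2 * ∑ i ∈ Finset.range J, ((i : ℝ) + 1) ^ (1 + 2 * α) * ψ.repr f₀ i ^ 2
      ≤ 1 / s ^ 2 * ((J : ℝ) ^ max (1 + 2 * α - 2 * β) 0 * Sβ) := by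
        gcongr
        refine (sum_range_rpow_mul_le _ (fun i => sq_nonneg _) J _ (2 * β)).trans ?_
        gcongr
        exact sum_le_hasSum _ (fun i _ => by positivity) hS
    _ = Sβ / s ^ 2 * (J : ℝ) ^ max (1 + 2 * α - 2 * β) 0 := by ring

/-- Bound on the infimum of the squared RKHS norm over the `ε`-ball around `f₀`:
with `H^{s,J} = span(ψ_1,...,ψ_J)` (here indexed by `i < J`, with `j = i+1`) and
RKHS norm `(1/s²)Σ j^{1+2α} h_j²`, if `‖f₀‖_β² = Sβ` and `J ≥ (ε/‖f₀‖_β)^{-1/β}`, then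
`inf{‖h‖²_{H^{s,J}} : ‖h − f₀‖₂ ≤ ε} ≤ (Sβ/s²)·J^{max(1+2α−2β,0)}`. -/
theorem stmt6 (α β s ε : ℝ) (hα : 0 < α) (hβ : 0 < β) (hs : 0 < s) (hε : 0 < ε)
    (ψ : HilbertBasis ℕ ℝ (Lp ℝ 2 (volume.restrict (Set.Icc (0:ℝ) 1))))
    (f₀ : Lp ℝ 2 (volume.restrict (Set.Icc (0:ℝ) 1)))
    (Sβ : ℝ) (hSpos : 0 < Sβ)
    (hS : HasSum (fun i : ℕ => ((i : ℝ) + 1) ^ (2 * β) * (ψ.repr f₀ i) ^ 2) Sβ)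
    (J : ℕ) (hJ : (ε / Real.sqrt Sβ) ^ (-(1 / β)) ≤ (J : ℝ)) :
    sInf {x : ℝ | ∃ c : ℕ → ℝ,
        ‖(∑ i ∈ Finset.range J, c i • ψ i) - f₀‖ ≤ ε ∧
        x = 1 / s ^ 2 * ∑ i ∈ Finset.range J, ((i : ℝ) + 1) ^ (1 + 2 * α) * (c i) ^ 2} ≤
      Sβ / s ^ 2 * (J : ℝ) ^ max (1 + 2 * α - 2 * β) 0 :=
  stmt6_general α β s ε hβ hε ψ f₀ Sβ hSpos hS J hJ
end
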